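/- arXiv:1701.01337 — 2 statements merged into one kernel-verified Lean document; each statement's English description precedes it below -/
import Mathlib

section
/- Let G = (V,E) be a graph with h(G) = bw(G), let y be an optimum bisection vector of G (cw(y) = bw(G)), and let u, v be vertices in different parts of this bisection (y_u ≠ y_v) with {u,v} ∈ E. Then the graph G' = (V, E ∖ {{u,v}}) satisfies h(G') = bw(G) − 1 = bw(G'). -/
open Matrix BigOperators Finset

noncomputable section

/-- Adjacency matrix of a graph on `Fin n`, with real entries. -/
def adjA {n : ℕ} (G : SimpleGraph (Fin n)) [DecidableRel G.Adj] :
    Matrix (Fin n) (Fin n) ℝ :=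
  Matrix.of fun i j => if G.Adj i j then (1 : ℝ) else 0

/-- A bisection vector: entries in `{+1, -1}` summing to zero. -/
def IsBisection {n : ℕ} (x : Fin n → ℝ) : Prop :=
  (∀ i, x i = 1 ∨ x i = -1) ∧ ∑ i, x i = 0

/-- Cut width of a `±1` vector: `∑_{{i,j}∈E} (1 - x_i x_j)/2`, written as a sum
over ordered pairs (each edge counted twice, hence the `/4`). -/
def cw {n : ℕ} (G : SimpleGraph (Fin n)) [DecidableRel G.Adj] (x : Fin n → ℝ) : ℝ :=
  (∑ i, ∑ j, adjA G i j * (1 - x i * x j)) / 4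

/-- Bisection width: minimum cut width over all bisection vectors. -/
def bw {n : ℕ} (G : SimpleGraph (Fin n)) [DecidableRel G.Adj] : ℝ :=
  sInf {c | ∃ x : Fin n → ℝ, IsBisection x ∧ cw G x = c}

/-- `λ_S(B)`: supremum of the Rayleigh quotient of `B` over nonzero vectors of
coordinate sum zero. -/
def lamS {n : ℕ} (B : Matrix (Fin n) (Fin n) ℝ) : ℝ :=
  sSup {r | ∃ x : Fin n → ℝ, x ≠ 0 ∧ ∑ i, x i = 0 ∧
    r = (x ⬝ᵥ B.mulVec x) / (∑ i, (x i) ^ 2)}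

/-- Sum of all entries of a matrix. -/
def msum {n : ℕ} (M : Matrix (Fin n) (Fin n) ℝ) : ℝ := ∑ i, ∑ j, M i j

/-- Boppana's function `g(G,d)`. -/
def gB {n : ℕ} (G : SimpleGraph (Fin n)) [DecidableRel G.Adj] (d : Fin n → ℝ) : ℝ :=
  (msum (adjA G + Matrix.diagonal d) - n * lamS (adjA G + Matrix.diagonal d)) / 4

/-- Boppana's lower bound `h(G) = sup_d g(G,d)`. -/
def hB {n : ℕ} (G : SimpleGraph (Fin n)) [DecidableRel G.Adj] : ℝ :=
  sSup {r | ∃ d : Fin n → ℝ, r = gB G d}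



lemma dot_mulVec_eq {n : ℕ} (B : Matrix (Fin n) (Fin n) ℝ) (x : Fin n → ℝ) :
    x ⬝ᵥ B.mulVec x = ∑ i, ∑ j, B i j * x i * x j := by
  simp only [dotProduct, Matrix.mulVec, Finset.mul_sum]
  exact Finset.sum_congr rfl fun i _ => Finset.sum_congr rfl fun j _ => by ring

lemma sum_sq_pos {n : ℕ} {x : Fin n → ℝ} (hx : x ≠ 0) : 0 < ∑ i, (x i)^2 := by
  obtain ⟨i, hi⟩ := Function.ne_iff.mp hx
  exact Finset.sum_pos' (fun j _ => sq_nonneg _) ⟨i, Finset.mem_univ i, (sq_nonneg _).lt_of_ne (Ne.symm (pow_ne_zero 2 hi))⟩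

lemma lamS_bddAbove {n : ℕ} (B : Matrix (Fin n) (Fin n) ℝ) :
    BddAbove {r | ∃ x : Fin n → ℝ, x ≠ 0 ∧ ∑ i, x i = 0 ∧
      r = (x ⬝ᵥ B.mulVec x) / (∑ i, (x i) ^ 2)} := by
  refine ⟨∑ i, ∑ j, |B i j|, ?_⟩
  rintro r ⟨x, hx, -, rfl⟩
  have hs : 0 < ∑ i, (x i)^2 := sum_sq_pos hx
  rw [div_le_iff₀ hs, dot_mulVec_eq]
  have key : ∀ i j : Fin n, B i j * x i * x j ≤ |B i j| * ∑ k, (x k)^2 := by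
    intro i j
    have h1 : (x i)^2 ≤ ∑ k, (x k)^2 :=
      Finset.single_le_sum (fun k _ => sq_nonneg (x k)) (Finset.mem_univ i)
    have h2 : (x j)^2 ≤ ∑ k, (x k)^2 :=
      Finset.single_le_sum (fun k _ => sq_nonneg (x k)) (Finset.mem_univ j)
    have h3 : B i j * x i * x j ≤ |B i j| * (|x i| * |x j|) := by
      calc B i j * x i * x j ≤ |B i j * x i * x j| := le_abs_self _
        _ = |B i j| * (|x i| * |x j|) := by rw [abs_mul, abs_mul, mul_assoc]
    have h4 : |x i| * |x j| ≤ ∑ k, (x k)^2 := by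
      nlinarith [sq_nonneg (|x i| - |x j|), sq_abs (x i), sq_abs (x j), abs_nonneg (x i), abs_nonneg (x j)]
    calc B i j * x i * x j ≤ |B i j| * (|x i| * |x j|) := h3
      _ ≤ |B i j| * ∑ k, (x k)^2 := mul_le_mul_of_nonneg_left h4 (abs_nonneg _)
  calc ∑ i, ∑ j, B i j * x i * x j ≤ ∑ i, ∑ j, |B i j| * ∑ k, (x k)^2 :=
        Finset.sum_le_sum fun i _ => Finset.sum_le_sum fun j _ => key i j
    _ = (∑ i, ∑ j, |B i j|) * ∑ k, (x k)^2 := by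
        rw [Finset.sum_mul]; exact Finset.sum_congr rfl fun i _ => by rw [Finset.sum_mul]

lemma lamS_ge {n : ℕ} (B : Matrix (Fin n) (Fin n) ℝ) (x : Fin n → ℝ)
    (hx : x ≠ 0) (hxs : ∑ i, x i = 0) :
    (x ⬝ᵥ B.mulVec x) / (∑ i, (x i)^2) ≤ lamS B :=
  le_csSup (lamS_bddAbove B) ⟨x, hx, hxs, rfl⟩

lemma lamS_mono {n : ℕ} (B B' : Matrix (Fin n) (Fin n) ℝ) (x₀ : Fin n → ℝ)
    (h0 : x₀ ≠ 0) (hs0 : ∑ i, x₀ i = 0)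
    (h : ∀ x : Fin n → ℝ, x ⬝ᵥ B'.mulVec x ≤ x ⬝ᵥ B.mulVec x) :
    lamS B' ≤ lamS B := by
  have hmem : (x₀ ⬝ᵥ B'.mulVec x₀) / (∑ i, (x₀ i)^2) ∈
      {r | ∃ x : Fin n → ℝ, x ≠ 0 ∧ ∑ i, x i = 0 ∧
        r = (x ⬝ᵥ B'.mulVec x) / (∑ i, (x i) ^ 2)} := ⟨x₀, h0, hs0, rfl⟩
  apply csSup_le ⟨_, hmem⟩
  rintro r ⟨x, hx, hxs, rfl⟩
  refine le_trans ?_ (lamS_ge B x hx hxs)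
  have hs : 0 < ∑ i, (x i)^2 := sum_sq_pos hx
  exact div_le_div_of_nonneg_right (h x) hs.le

lemma quad_add_diag {n : ℕ} (A : Matrix (Fin n) (Fin n) ℝ) (d x : Fin n → ℝ) :
    x ⬝ᵥ (A + Matrix.diagonal d).mulVec x
      = x ⬝ᵥ A.mulVec x + ∑ i, d i * (x i)^2 := by
  rw [Matrix.add_mulVec, dotProduct_add]
  congr 1
  simp only [dotProduct, Matrix.mulVec_diagonal]
  exact Finset.sum_congr rfl fun i _ => by ring

lemma msum_add_diag {n : ℕ} (A : Matrix (Fin n) (Fin n) ℝ) (d : Fin n → ℝ) :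
    msum (A + Matrix.diagonal d) = msum A + ∑ i, d i := by
  unfold msum
  simp only [Matrix.add_apply, Finset.sum_add_distrib]
  congr 1
  exact Finset.sum_congr rfl fun i _ => by
    simp [Matrix.diagonal_apply, Finset.sum_ite_eq]

lemma cw_eq {n : ℕ} (G : SimpleGraph (Fin n)) [DecidableRel G.Adj] (x : Fin n → ℝ) :
    cw G x = (msum (adjA G) - x ⬝ᵥ (adjA G).mulVec x) / 4 := by
  unfold cw msum
  rw [dot_mulVec_eq]
  congr 1
  rw [← Finset.sum_sub_distrib]
  refine Finset.sum_congr rfl fun i _ => ?_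
  rw [← Finset.sum_sub_distrib]
  exact Finset.sum_congr rfl fun j _ => by ring

def E1 {n : ℕ} (a b : Fin n) : Matrix (Fin n) (Fin n) ℝ :=
  Matrix.of fun i j => (if i = a then (1:ℝ) else 0) * (if j = b then 1 else 0)

lemma msum_E1 {n : ℕ} (a b : Fin n) : msum (E1 a b) = 1 := by
  unfold msum E1
  simp only [Matrix.of_apply]
  rw [← Finset.sum_mul_sum]
  simp

lemma quad_E1 {n : ℕ} (a b : Fin n) (x : Fin n → ℝ) :
    x ⬝ᵥ (E1 a b).mulVec x = x a * x b := by
  rw [dot_mulVec_eq]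
  unfold E1
  simp only [Matrix.of_apply, ite_mul, one_mul, zero_mul, mul_ite]
  simp [Finset.sum_ite_eq']

lemma quad_add {n : ℕ} (M N : Matrix (Fin n) (Fin n) ℝ) (x : Fin n → ℝ) :
    x ⬝ᵥ (M + N).mulVec x = x ⬝ᵥ M.mulVec x + x ⬝ᵥ N.mulVec x := by
  rw [Matrix.add_mulVec, dotProduct_add]

lemma msum_add {n : ℕ} (M N : Matrix (Fin n) (Fin n) ℝ) :
    msum (M + N) = msum M + msum N := by
  unfold msum
  simp [Matrix.add_apply, Finset.sum_add_distrib]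

lemma adjA_decomp {n : ℕ} (G G' : SimpleGraph (Fin n)) [DecidableRel G.Adj]
    [DecidableRel G'.Adj] (u v : Fin n) (hadj : G.Adj u v)
    (hG' : ∀ a b, G'.Adj a b ↔ G.Adj a b ∧ ¬((a = u ∧ b = v) ∨ (a = v ∧ b = u))) :
    adjA G = adjA G' + (E1 u v + E1 v u) := by
  have hne : u ≠ v := hadj.ne
  ext i j
  simp only [Matrix.add_apply, adjA, E1, Matrix.of_apply]
  by_cases h1 : i = u ∧ j = v
  · obtain ⟨rfl, rfl⟩ := h1
    have hf : ¬ G'.Adj i j := fun h => ((hG' i j).mp h).2 (Or.inl ⟨rfl, rfl⟩)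
    simp [hadj, hf, hne, hne.symm]
  · by_cases h2 : i = v ∧ j = u
    · obtain ⟨rfl, rfl⟩ := h2
      have hf : ¬ G'.Adj i j := fun h => ((hG' i j).mp h).2 (Or.inr ⟨rfl, rfl⟩)
      simp [hadj.symm, hf, hne, hne.symm]
    · have hGG' : G'.Adj i j ↔ G.Adj i j := by
        rw [hG']; tauto
      have e1 : (if i = u then (1:ℝ) else 0) * (if j = v then 1 else 0) = 0 := by
        rcases not_and_or.mp h1 with h | h <;> simp [h]
      have e2 : (if i = v then (1:ℝ) else 0) * (if j = u then 1 else 0) = 0 := by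
        rcases not_and_or.mp h2 with h | h <;> simp [h]
      rw [e1, e2]
      by_cases hA : G.Adj i j <;> simp [hA, hGG']

lemma bis_sq {n : ℕ} {x : Fin n → ℝ} (hx : IsBisection x) (i : Fin n) :
    (x i)^2 = 1 := by
  rcases hx.1 i with h | h <;> rw [h] <;> norm_num

lemma bis_sum_sq {n : ℕ} {x : Fin n → ℝ} (hx : IsBisection x) :
    ∑ i, (x i)^2 = (n : ℝ) := by
  rw [Finset.sum_congr rfl fun i _ => bis_sq hx i]
  simp

lemma bis_ne_zero {n : ℕ} (hn : 2 ≤ n) {x : Fin n → ℝ} (hx : IsBisection x) :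
    x ≠ 0 := by
  intro h
  have := hx.1 ⟨0, by omega⟩
  rw [h] at this
  simp at this

lemma cw_nonneg {n : ℕ} (G : SimpleGraph (Fin n)) [DecidableRel G.Adj]
    {x : Fin n → ℝ} (hx : IsBisection x) : 0 ≤ cw G x := by
  unfold cw
  apply div_nonneg _ (by norm_num)
  apply Finset.sum_nonneg; intro i _
  apply Finset.sum_nonneg; intro j _
  apply mul_nonneg
  · unfold adjA; simp only [Matrix.of_apply]; split <;> norm_num
  · have : x i * x j ≤ 1 := by
      rcases hx.1 i with h | h <;> rcases hx.1 j with h' | h' <;> rw [h, h'] <;> norm_num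
    linarith

lemma gB_le_cw {n : ℕ} (hn : 2 ≤ n) (G : SimpleGraph (Fin n)) [DecidableRel G.Adj]
    (d : Fin n → ℝ) {x : Fin n → ℝ} (hx : IsBisection x) :
    gB G d ≤ cw G x := by
  have hx0 : x ≠ 0 := bis_ne_zero hn hx
  have hss : ∑ i, (x i)^2 = (n : ℝ) := bis_sum_sq hx
  have hnpos : (0:ℝ) < n := by positivity
  set B := adjA G + Matrix.diagonal d with hB
  have hlam : (x ⬝ᵥ B.mulVec x) / (n : ℝ) ≤ lamS B := by
    rw [← hss]; exact lamS_ge B x hx0 hx.2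
  have hq : x ⬝ᵥ B.mulVec x = x ⬝ᵥ (adjA G).mulVec x + ∑ i, d i := by
    rw [hB, quad_add_diag]
    congr 1
    exact Finset.sum_congr rfl fun i _ => by rw [bis_sq hx i, mul_one]
  have hm : msum B = msum (adjA G) + ∑ i, d i := msum_add_diag _ _
  have h1 : x ⬝ᵥ B.mulVec x ≤ (n : ℝ) * lamS B := by
    rw [div_le_iff₀ hnpos] at hlam
    linarith
  rw [cw_eq]
  unfold gB
  rw [← hB, hm, hq] at *
  linarith

lemma gB_le_bw {n : ℕ} (hn : 2 ≤ n) (G : SimpleGraph (Fin n)) [DecidableRel G.Adj]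
    (d : Fin n → ℝ) {y : Fin n → ℝ} (hy : IsBisection y) :
    gB G d ≤ bw G := by
  apply le_csInf
  · exact ⟨cw G y, y, hy, rfl⟩
  rintro c ⟨x, hx, rfl⟩
  exact gB_le_cw hn G d hx

lemma hB_le_bw {n : ℕ} (hn : 2 ≤ n) (G : SimpleGraph (Fin n)) [DecidableRel G.Adj]
    {y : Fin n → ℝ} (hy : IsBisection y) :
    hB G ≤ bw G := by
  apply csSup_le
  · exact ⟨gB G 0, 0, rfl⟩
  rintro r ⟨d, rfl⟩
  exact gB_le_bw hn G d hy

/-- removing a cut edge of an optimum bisection gives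
`h(G') = bw(G) - 1 = bw(G')`. -/
theorem remove_cut_edge {n : ℕ} (hn2 : 2 ≤ n) (hne : Even n)
    (G G' : SimpleGraph (Fin n)) [DecidableRel G.Adj] [DecidableRel G'.Adj]
    (hh : hB G = bw G)
    (y : Fin n → ℝ) (hy : IsBisection y) (hopt : cw G y = bw G)
    (u v : Fin n) (hdiff : y u ≠ y v) (hadj : G.Adj u v)
    (hG' : ∀ a b, G'.Adj a b ↔ G.Adj a b ∧ ¬((a = u ∧ b = v) ∨ (a = v ∧ b = u))) :
    hB G' = bw G - 1 ∧ bw G - 1 = bw G' := by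
  have huv : u ≠ v := hadj.ne
  have hAd : adjA G = adjA G' + (E1 u v + E1 v u) := adjA_decomp G G' u v hadj hG'
  have hy0 : y ≠ 0 := bis_ne_zero hn2 hy
  -- y u * y v = -1
  have hyuv : y u * y v = -1 := by
    rcases hy.1 u with h | h <;> rcases hy.1 v with h' | h'
    · exact absurd (h.trans h'.symm) hdiff
    · rw [h, h']; norm_num
    · rw [h, h']; norm_num
    · exact absurd (h.trans h'.symm) hdiff
  have hyvu : y v * y u = -1 := by rw [mul_comm]; exact hyuv
  -- cut width drops by one
  have hcw' : cw G' y = cw G y - 1 := by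
    rw [cw_eq, cw_eq, hAd, msum_add, quad_add, msum_add, quad_add,
      msum_E1, msum_E1, quad_E1, quad_E1, hyuv, hyvu]
    ring
  -- bw G' ≤ bw G - 1
  have hbdd' : BddBelow {c | ∃ x : Fin n → ℝ, IsBisection x ∧ cw G' x = c} := by
    refine ⟨0, ?_⟩
    rintro c ⟨x, hx, rfl⟩
    exact cw_nonneg G' hx
  have hbw'le : bw G' ≤ bw G - 1 := by
    have h := csInf_le hbdd' (⟨y, hy, rfl⟩ :
      cw G' y ∈ {c | ∃ x : Fin n → ℝ, IsBisection x ∧ cw G' x = c})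
    rw [hcw', hopt] at h
    exact h
  -- hB G' ≤ bw G'
  have hhb' : hB G' ≤ bw G' := hB_le_bw hn2 G' hy
  -- per-d: gB G d - 1 ≤ hB G'
  have hgset_bdd : BddAbove {r | ∃ d : Fin n → ℝ, r = gB G' d} := by
    refine ⟨bw G', ?_⟩
    rintro r ⟨d, rfl⟩
    exact gB_le_bw hn2 G' d hy
  have hstep : ∀ d : Fin n → ℝ, gB G d ≤ hB G' + 1 := by
    intro d
    set d' : Fin n → ℝ :=
      fun i => d i - ((if i = u then (1:ℝ) else 0) + (if i = v then 1 else 0)) with hd'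
    -- quadratic form comparison
    have hquad : ∀ x : Fin n → ℝ,
        x ⬝ᵥ (adjA G' + Matrix.diagonal d').mulVec x
          ≤ x ⬝ᵥ (adjA G + Matrix.diagonal d).mulVec x := by
      intro x
      rw [quad_add_diag, quad_add_diag, hAd, quad_add, quad_add, quad_E1, quad_E1]
      have hchi : ∑ i, d' i * (x i)^2
          = ∑ i, d i * (x i)^2 - ((x u)^2 + (x v)^2) := by
        simp only [hd', sub_mul, add_mul, ite_mul, one_mul, zero_mul]
        rw [Finset.sum_sub_distrib, Finset.sum_add_distrib]
        simp [Finset.sum_ite_eq']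
      rw [hchi]
      nlinarith [sq_nonneg (x u + x v)]
    have hlam : lamS (adjA G' + Matrix.diagonal d')
        ≤ lamS (adjA G + Matrix.diagonal d) :=
      lamS_mono _ _ y hy0 hy.2 hquad
    have hsumd' : ∑ i, d' i = (∑ i, d i) - 2 := by
      simp only [hd']
      rw [Finset.sum_sub_distrib, Finset.sum_add_distrib]
      simp [Finset.sum_ite_eq', huv.symm]
      norm_num
    have hm : msum (adjA G' + Matrix.diagonal d')
        = msum (adjA G + Matrix.diagonal d) - 4 := by
      rw [msum_add_diag, msum_add_diag, hAd, msum_add, msum_add, msum_E1, msum_E1, hsumd']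
      ring
    have hg : gB G d - 1 ≤ gB G' d' := by
      unfold gB
      rw [hm]
      have hn0 : (0:ℝ) ≤ n := by positivity
      have := mul_le_mul_of_nonneg_left hlam hn0
      linarith
    have hmem : gB G' d' ∈ {r | ∃ d : Fin n → ℝ, r = gB G' d} := ⟨d', rfl⟩
    have := le_csSup hgset_bdd hmem
    have : gB G' d' ≤ hB G' := this
    linarith
  have hhgle : hB G ≤ hB G' + 1 := by
    apply csSup_le
    · exact ⟨gB G 0, 0, rfl⟩
    · rintro r ⟨d, rfl⟩
      exact hstep d
  rw [hh] at hhgle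
  constructor <;> linarith
end
end

section
/- Let G be a graph with h(G) = bw(G) and let y be an optimum bisection vector (cw(y) = bw(G)). Then for every d^opt ∈ ℝ^n with g(G,d^opt) = bw(G) and ∑_i d^opt_i = 4·bw(G) − 2|E|, there exists α ∈ ℝ such that d^opt = d^{(y)} + α·y. -/
open Matrix BigOperators Finset

noncomputable section

/-- Number of edges of `G`. -/
def edgeCount {n : ℕ} (G : SimpleGraph (Fin n)) [DecidableRel G.Adj] : ℕ :=
  G.edgeFinset.card

/-- The vector `d^{(y)} = -diag(y)·A·y`, i.e. `d^{(y)}_i = -y_i ∑_j A_{ij} y_j`. -/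
def dVec {n : ℕ} (G : SimpleGraph (Fin n)) [DecidableRel G.Adj]
    (y : Fin n → ℝ) : Fin n → ℝ :=
  fun i => -(y i) * ∑ j, adjA G i j * y j

/-!
Put `B = A + diag d^opt`. The normalisation of `∑ d^opt` makes `sum(B) = 4 bw(G)`, so
`g(G, d^opt) = bw(G)` forces `λ_S(B) = 0`: the form `xᵀBx` is nonpositive on `S`. An optimal
bisection `y` lies in `S` and has `yᵀBy = 0`, so it maximises the form on `S`; hence `By ⊥ S`,
i.e. `By = α·𝟙`. Reading this coordinatewise and multiplying by `y_i = ±1` gives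
`d^opt_i = d^{(y)}_i + α y_i`.
-/

section QuadraticForm

variable {ι : Type*} [Fintype ι]

/-- The subspace `S`. -/
def sumZero (ι : Type*) [Fintype ι] : Submodule ℝ (ι → ℝ) where
  carrier := {x | ∑ i, x i = 0}
  add_mem' hx hy := by simp_all [Finset.sum_add_distrib]
  zero_mem' := by simp
  smul_mem' c x hx := by simp_all [← Finset.mul_sum]

@[simp]
lemma mem_sumZero {x : ι → ℝ} : x ∈ sumZero ι ↔ ∑ i, x i = 0 := Iff.rfl

lemma sum_sq_pos_of_ne_zero {x : ι → ℝ} (hx : x ≠ 0) : 0 < ∑ i, x i ^ 2 := by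
  obtain ⟨i, hi⟩ := Function.ne_iff.mp hx
  exact Finset.sum_pos' (fun k _ => sq_nonneg (x k)) ⟨i, Finset.mem_univ i, sq_pos_of_ne_zero hi⟩

lemma abs_mul_le_sum_sq (x : ι → ℝ) (i j : ι) : |x i * x j| ≤ ∑ k, x k ^ 2 := by
  have hi := Finset.single_le_sum (fun k _ => sq_nonneg (x k)) (Finset.mem_univ i)
  have hj := Finset.single_le_sum (fun k _ => sq_nonneg (x k)) (Finset.mem_univ j)
  have := two_mul_le_add_sq |x i| |x j|
  rw [sq_abs, sq_abs] at this
  rw [abs_mul]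
  linarith

lemma dotProduct_mulVec_le_sum_abs_mul (B : Matrix ι ι ℝ) (x : ι → ℝ) :
    x ⬝ᵥ B *ᵥ x ≤ (∑ i, ∑ j, |B i j|) * ∑ i, x i ^ 2 := by
  calc x ⬝ᵥ B *ᵥ x = ∑ i, ∑ j, B i j * (x i * x j) := by
        simp only [dotProduct, mulVec, Finset.mul_sum]
        exact Finset.sum_congr rfl fun i _ => Finset.sum_congr rfl fun j _ => by ring
    _ ≤ ∑ i, ∑ j, |B i j| * ∑ k, x k ^ 2 := by
        refine Finset.sum_le_sum fun i _ => Finset.sum_le_sum fun j _ => ?_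
        calc B i j * (x i * x j) ≤ |B i j * (x i * x j)| := le_abs_self _
          _ ≤ |B i j| * ∑ k, x k ^ 2 := by
            rw [abs_mul]
            exact mul_le_mul_of_nonneg_left (abs_mul_le_sum_sq x i j) (abs_nonneg _)
    _ = (∑ i, ∑ j, |B i j|) * ∑ i, x i ^ 2 := by simp only [Finset.sum_mul]

lemma dotProduct_mulVec_add_diagonal [DecidableEq ι] (M : Matrix ι ι ℝ) (d x : ι → ℝ) :
    x ⬝ᵥ (M + diagonal d) *ᵥ x = x ⬝ᵥ M *ᵥ x + ∑ i, d i * x i ^ 2 := by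
  rw [add_mulVec, dotProduct_add]
  congr 1
  simp only [dotProduct, mulVec_diagonal]
  exact Finset.sum_congr rfl fun i _ => by ring

lemma eq_zero_of_forall_mul_add_sq_mul_nonpos {b c : ℝ} (h : ∀ t : ℝ, b * t + c * t ^ 2 ≤ 0) :
    b = 0 := by
  have := discrim_le_zero (a := -c) (b := -b) (c := 0) fun t => by nlinarith [h t]
  rw [discrim] at this
  nlinarith [sq_nonneg b]

/-- `y` maximizes the form on `p`, so the first variation
`Q(y + t z) = 2 t (z ⬝ B y) + t² Q(z)` must vanish. -/
lemma dotProduct_mulVec_eq_zero_of_isMax {B : Matrix ι ι ℝ} (hB : B.IsSymm)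
    {p : Submodule ℝ (ι → ℝ)} (hQ : ∀ x ∈ p, x ⬝ᵥ B *ᵥ x ≤ 0)
    {y : ι → ℝ} (hy : y ∈ p) (hyy : y ⬝ᵥ B *ᵥ y = 0) {z : ι → ℝ} (hz : z ∈ p) :
    z ⬝ᵥ B *ᵥ y = 0 := by
  have hsymm : y ⬝ᵥ B *ᵥ z = z ⬝ᵥ B *ᵥ y := by
    rw [dotProduct_mulVec, ← mulVec_transpose, hB.eq, dotProduct_comm]
  refine (mul_eq_zero.mp (eq_zero_of_forall_mul_add_sq_mul_nonpos
    (c := z ⬝ᵥ B *ᵥ z) fun t => ?_)).resolve_left two_ne_zero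
  have := hQ (y + t • z) (p.add_mem hy (p.smul_mem t hz))
  simp only [mulVec_add, mulVec_smul, add_dotProduct, dotProduct_add, smul_dotProduct,
    dotProduct_smul, smul_eq_mul, hyy, hsymm] at this
  linarith

lemma exists_eq_const_of_forall_dotProduct_eq_zero {w : ι → ℝ}
    (h : ∀ z ∈ sumZero ι, z ⬝ᵥ w = 0) : ∃ α : ℝ, w = fun _ => α := by
  classical
  rcases isEmpty_or_nonempty ι with hι | ⟨⟨i₀⟩⟩
  · exact ⟨0, Subsingleton.elim _ _⟩
  refine ⟨w i₀, funext fun i => ?_⟩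
  have := h (Pi.single i 1 - Pi.single i₀ 1) (by simp [Finset.sum_sub_distrib])
  rw [sub_dotProduct, single_dotProduct, single_dotProduct] at this
  linarith

end QuadraticForm

section FinVectors

variable {n : ℕ}

lemma msum_add_diagonal (M : Matrix (Fin n) (Fin n) ℝ) (d : Fin n → ℝ) :
    msum (M + diagonal d) = msum M + ∑ i, d i := by
  simp [msum, Finset.sum_add_distrib, diagonal_apply]

lemma bddAbove_rayleigh (B : Matrix (Fin n) (Fin n) ℝ) :
    BddAbove {r | ∃ x : Fin n → ℝ, x ≠ 0 ∧ ∑ i, x i = 0 ∧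
      r = (x ⬝ᵥ B.mulVec x) / (∑ i, (x i) ^ 2)} := by
  refine ⟨∑ i, ∑ j, |B i j|, ?_⟩
  rintro r ⟨x, hx0, -, rfl⟩
  exact (div_le_iff₀ (sum_sq_pos_of_ne_zero hx0)).2 (dotProduct_mulVec_le_sum_abs_mul B x)

lemma dotProduct_mulVec_le_lamS_mul (B : Matrix (Fin n) (Fin n) ℝ) {x : Fin n → ℝ}
    (hx : ∑ i, x i = 0) : x ⬝ᵥ B *ᵥ x ≤ lamS B * ∑ i, x i ^ 2 := by
  rcases eq_or_ne x 0 with rfl | hx0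
  · simp
  exact (div_le_iff₀ (sum_sq_pos_of_ne_zero hx0)).1
    (le_csSup (bddAbove_rayleigh B) ⟨x, hx0, hx, rfl⟩)

lemma IsBisection.sq_eq_one {y : Fin n → ℝ} (hy : IsBisection y) (i : Fin n) :
    y i ^ 2 = 1 := by
  rcases hy.1 i with h | h <;> simp [h]

variable (G : SimpleGraph (Fin n)) [DecidableRel G.Adj]

lemma isSymm_adjA : (adjA G).IsSymm := G.isSymm_adjMatrix

lemma msum_adjA : msum (adjA G) = 2 * edgeCount G := by
  calc msum (adjA G) = ∑ i, (G.adjMatrix ℝ *ᵥ Function.const _ 1) i := by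
        simp [msum, adjA, SimpleGraph.adjMatrix, mulVec, dotProduct]
    _ = ∑ i, (G.degree i : ℝ) := by simp only [SimpleGraph.adjMatrix_mulVec_const_apply, mul_one]
    _ = 2 * edgeCount G := by exact_mod_cast G.sum_degrees_eq_twice_card_edges

lemma four_mul_cw (x : Fin n → ℝ) : 4 * cw G x = msum (adjA G) - x ⬝ᵥ adjA G *ᵥ x := by
  rw [cw, mul_div_cancel₀ _ four_ne_zero, msum]
  simp only [dotProduct, mulVec, Finset.mul_sum, ← Finset.sum_sub_distrib]
  exact Finset.sum_congr rfl fun i _ => Finset.sum_congr rfl fun j _ => by ring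

end FinVectors

theorem dopt_eq_dVec_add_smul_general {n : ℕ} (hn2 : 2 ≤ n)
    (G : SimpleGraph (Fin n)) [DecidableRel G.Adj]
    (y : Fin n → ℝ) (hy : IsBisection y) (hopt : cw G y = bw G)
    (dopt : Fin n → ℝ) (hg : gB G dopt = bw G)
    (hsum : ∑ i, dopt i = 4 * bw G - 2 * (edgeCount G : ℝ)) :
    ∃ α : ℝ, dopt = fun i => dVec G y i + α * y i := by
  set B := adjA G + diagonal dopt
  have hmsum : msum B = 4 * bw G := by rw [msum_add_diagonal, msum_adjA, hsum]; ring
  have hlam : lamS B = 0 := by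
    have hn : (n : ℝ) ≠ 0 := Nat.cast_ne_zero.2 (by omega)
    rw [gB, hmsum] at hg
    exact (mul_eq_zero.1 (by linarith : (n : ℝ) * lamS B = 0)).resolve_left hn
  have hyy : y ⬝ᵥ B *ᵥ y = 0 := by
    have := four_mul_cw G y
    rw [msum_adjA, hopt] at this
    simp only [B, dotProduct_mulVec_add_diagonal, hy.sq_eq_one, mul_one]
    linarith
  obtain ⟨α, hα⟩ := exists_eq_const_of_forall_dotProduct_eq_zero fun z hz =>
    dotProduct_mulVec_eq_zero_of_isMax ((isSymm_adjA G).add (isSymm_diagonal dopt))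
      (fun x hx => by simpa [hlam] using dotProduct_mulVec_le_lamS_mul B hx)
      (mem_sumZero.2 hy.2) hyy hz
  refine ⟨α, funext fun i => ?_⟩
  have hi := congr_fun hα i
  simp only [add_mulVec, mulVec_diagonal, Pi.add_apply] at hi
  simp only [dVec, mulVec, dotProduct] at hi ⊢
  linear_combination y i * hi - dopt i * hy.sq_eq_one i

/-- every optimal `d^opt` (with normalized sum) is of the form
`d^{(y)} + α·y` for an optimum bisection vector `y`. -/
theorem dopt_eq_dVec_add_smul {n : ℕ} (hn2 : 2 ≤ n) (hne : Even n)
    (G : SimpleGraph (Fin n)) [DecidableRel G.Adj]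
    (hh : hB G = bw G)
    (y : Fin n → ℝ) (hy : IsBisection y) (hopt : cw G y = bw G)
    (dopt : Fin n → ℝ) (hg : gB G dopt = bw G)
    (hsum : ∑ i, dopt i = 4 * bw G - 2 * (edgeCount G : ℝ)) :
    ∃ α : ℝ, dopt = fun i => dVec G y i + α * y i :=
  dopt_eq_dVec_add_smul_general hn2 G y hy hopt dopt hg hsum
end
end
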